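/- Let (Ā, B̄) be the structural pair composed of r similar subsystems parametrized by (Ā', B̄', H̄, Ē), where (Ā', B̄') is not structurally controllable. If (Ā' ∨ H̄, B̄') is structurally controllable and the condensed graph D(Ē) is spanned by disjoint cycles, i.e., there exists a permutation σ of {1,…,r} with Ē_{σ(i),i} = 1 for all i, then (Ā, B̄) is structurally controllable. -/

import Mathlib

open Matrix

/-- Controllability matrix `[B, AB, …, A^{n-1}B]` (columns indexed by `Fin (card X) × U`). -/
def ctrbMatrix {X U : Type*} [Fintype X] [DecidableEq X]
    (A : Matrix X X ℝ) (B : Matrix X U ℝ) :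
    Matrix X (Fin (Fintype.card X) × U) ℝ :=
  fun i kj => (A ^ (kj.1 : ℕ) * B) i kj.2

/-- A real pair `(A,B)` is controllable if its controllability matrix has full rank. -/
def Controllable {X U : Type*} [Fintype X] [DecidableEq X] [Fintype U]
    (A : Matrix X X ℝ) (B : Matrix X U ℝ) : Prop :=
  (ctrbMatrix A B).rank = Fintype.card X

/-- `M` has the same sparsity pattern as the Boolean matrix `Mb`. -/
def SameSparsity {X Y : Type*} (M : Matrix X Y ℝ) (Mb : Matrix X Y Bool) : Prop :=
  ∀ i j, M i j = 0 ↔ Mb i j = false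

/-- Structural controllability of a structural (Boolean) pair. -/
def StructurallyControllable {X U : Type*} [Fintype X] [DecidableEq X] [Fintype U]
    (Ab : Matrix X X Bool) (Bb : Matrix X U Bool) : Prop :=
  ∃ A : Matrix X X ℝ, ∃ B : Matrix X U ℝ,
    SameSparsity A Ab ∧ SameSparsity B Bb ∧ Controllable A B

/-- Edge relation of the system digraph `D(Ā,B̄)`. -/
def sysDigraphRel {X U : Type*} (Ab : Matrix X X Bool) (Bb : Matrix X U Bool) :
    (X ⊕ U) → (X ⊕ U) → Prop :=
  fun v w => match v, w with
  | Sum.inl j, Sum.inl i => Ab i j = true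
  | Sum.inr k, Sum.inl i => Bb i k = true
  | _, Sum.inr _ => False

/-- A state vertex is input-reachable if some input vertex has a directed path to it. -/
def InputReachable {X U : Type*} (Ab : Matrix X X Bool) (Bb : Matrix X U Bool) (x : X) : Prop :=
  ∃ u : U, Relation.ReflTransGen (sysDigraphRel Ab Bb) (Sum.inr u) (Sum.inl x)

/-- Edge relation of the system bipartite graph `B(Ā,B̄)` (left = states ⊕ inputs, right = states). -/
def sysBipEdge {X U : Type*} (Ab : Matrix X X Bool) (Bb : Matrix X U Bool) :
    (X ⊕ U) → X → Prop :=
  fun v i => match v with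
  | Sum.inl j => Ab i j = true
  | Sum.inr k => Bb i k = true

/-- Edge relation of the state bipartite graph `B(Ā)`. -/
def stateBipEdge {X : Type*} (Ab : Matrix X X Bool) : X → X → Prop :=
  fun j i => Ab i j = true

/-- A matching of a bipartite graph with edge relation `E`: a set of edges sharing no
left vertex and no right vertex. -/
def IsMatching {α β : Type*} (E : α → β → Prop) (M : Set (α × β)) : Prop :=
  (∀ e ∈ M, E e.1 e.2) ∧
  (∀ e ∈ M, ∀ f ∈ M, e.1 = f.1 → e = f) ∧
  (∀ e ∈ M, ∀ f ∈ M, e.2 = f.2 → e = f)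

/-- Right vertices belonging to no edge of `M`. -/
def rightUnmatched {α β : Type*} (M : Set (α × β)) : Set β :=
  {b | ∀ e ∈ M, e.2 ≠ b}

/-- Left vertices belonging to no edge of `M`. -/
def leftUnmatched {α β : Type*} (M : Set (α × β)) : Set α :=
  {a | ∀ e ∈ M, e.1 ≠ a}

/-- A maximum matching: a matching of the largest cardinality. -/
def IsMaxMatching {α β : Type*} (E : α → β → Prop) (M : Set (α × β)) : Prop :=
  IsMatching E M ∧ ∀ M' : Set (α × β), IsMatching E M' → M'.ncard ≤ M.ncard

/-- `S` is a strongly connected component of the digraph with edge relation `R`. -/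
def IsSCC {V : Type*} (R : V → V → Prop) (S : Set V) : Prop :=
  S.Nonempty ∧ (∀ u ∈ S, ∀ v ∈ S, Relation.ReflTransGen R u v) ∧
  ∀ w : V, (∀ u ∈ S, Relation.ReflTransGen R u w ∧ Relation.ReflTransGen R w u) → w ∈ S

/-- An SCC is non-top linked if it has no incoming edge from outside. -/
def NonTopLinked {V : Type*} (R : V → V → Prop) (S : Set V) : Prop :=
  ∀ u v : V, R u v → v ∈ S → u ∈ S

/-- Dynamics pattern `(I_r ⊗ Ā') ∨ (Ē ⊗ H̄)` of a system of `r` similar subsystems. -/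
def simA {n : ℕ} (r : ℕ) (A' H : Matrix (Fin n) (Fin n) Bool)
    (E : Matrix (Fin r) (Fin r) Bool) :
    Matrix (Fin r × Fin n) (Fin r × Fin n) Bool :=
  fun q q' => ((if q.1 = q'.1 then A' q.2 q'.2 else false) || (E q.1 q'.1 && H q.2 q'.2))

/-- Input pattern `I_r ⊗ B̄'` of a system of `r` similar subsystems. -/
def simB {n p : ℕ} (r : ℕ) (B' : Matrix (Fin n) (Fin p) Bool) :
    Matrix (Fin r × Fin n) (Fin r × Fin p) Bool :=
  fun q k => if q.1 = k.1 then B' q.2 k.2 else false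

/-- Entrywise OR of Boolean matrices. -/
def orMat {X Y : Type*} (M N : Matrix X Y Bool) : Matrix X Y Bool :=
  fun i j => M i j || N i j

/-- Dynamics pattern of an interconnected system: diagonal blocks `Ā_i`,
off-diagonal blocks `Ē_{i,j}`. -/
def interA {r : ℕ} {n : Fin r → ℕ}
    (A : ∀ i, Matrix (Fin (n i)) (Fin (n i)) Bool)
    (E : ∀ i j, Matrix (Fin (n i)) (Fin (n j)) Bool) :
    Matrix (Σ i, Fin (n i)) (Σ i, Fin (n i)) Bool :=
  fun q q' => if h : q'.1 = q.1 then A q.1 q.2 (h ▸ q'.2) else E q.1 q'.1 q.2 q'.2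

/-- Input pattern of an interconnected system: block diagonal with blocks `B̄_i`. -/
def interB {r : ℕ} {n p : Fin r → ℕ}
    (B : ∀ i, Matrix (Fin (n i)) (Fin (p i)) Bool) :
    Matrix (Σ i, Fin (n i)) (Σ i, Fin (p i)) Bool :=
  fun q k => if h : k.1 = q.1 then B q.1 q.2 (h ▸ k.2) else false

/-! Split a controllable realisation `(A₀ + H₀, B)` of `(Ā' ∨ H̄, B̄')` into its `Ā'`-part and
its `H̄`-part, and couple `r` copies along the permutation `σ`:
`Â = I ⊗ A₀ + P_σ ⊗ t H₀`, `B̂ = I ⊗ B`. Since `P_σ ^ M = 1` with `M = orderOf σ`, every vector of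
`ℂ^r` is a sum of eigenvectors of `P_σ` with eigenvalues `ζ^τ` (`ζ` a primitive `M`-th root of
unity), and along an eigenvector for `λ` the pair `(Â, B̂)` acts as `(A₀ + λ t H₀, B)`. The latter
is controllable at `λ t = 1`, hence, controllability being the nonvanishing of a polynomial in the
parameter, for all but finitely many real `t` simultaneously for all `λ = ζ^τ`. So `(Â, B̂)` is
controllable, and its support lies in the pattern `(Ā, B̄)`; adding `s` times the `0/1` pattern
matrices for a generic real `s` fills the pattern without losing controllability. -/

open scoped Kronecker
open Filter Polynomial

namespace Matrix

section FullRowRank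

variable {K : Type*} [Field K] {X Y : Type*} [Fintype X] [Fintype Y]

theorem rank_eq_card_iff_linearIndependent_row {M : Matrix X Y K} :
    M.rank = Fintype.card X ↔ LinearIndependent K M.row := by
  rw [linearIndependent_iff_card_eq_finrank_span, rank_eq_finrank_span_row, Set.finrank, eq_comm]

theorem rank_eq_card_iff_vecMul_eq_zero {M : Matrix X Y K} :
    M.rank = Fintype.card X ↔ ∀ v : X → K, v ᵥ* M = 0 → v = 0 := by
  simp only [rank_eq_card_iff_linearIndependent_row, Fintype.linearIndependent_iff, vecMul_eq_sum,
    funext_iff, Pi.zero_apply]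
  rfl

variable [DecidableEq X]

theorem exists_mul_eq_one_of_rank_eq_card {M : Matrix X Y K}
    (h : M.rank = Fintype.card X) : ∃ N : Matrix Y X K, M * N = 1 := by
  classical
  have hrange : LinearMap.range M.mulVecLin = ⊤ :=
    Submodule.eq_top_of_finrank_eq (by rw [Module.finrank_fintype_fun_eq_card]; exact h)
  obtain ⟨g, hg⟩ := M.mulVecLin.exists_rightInverse_of_surjective hrange
  refine ⟨LinearMap.toMatrix' g, toLin'.injective ?_⟩
  rw [toLin'_mul, toLin'_toMatrix', toLin'_one, toLin'_apply', ← hg]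

theorem rank_eq_card_of_det_mul_ne_zero {M : Matrix X Y K} {N : Matrix Y X K}
    (h : (M * N).det ≠ 0) : M.rank = Fintype.card X :=
  le_antisymm M.rank_le_card_height <|
    (rank_of_det_ne_zero h).symm.trans_le (M.rank_mul_le_left N)

theorem rank_map_eq_card_iff {L : Type*} [Field L] (f : K →+* L) {M : Matrix X Y K} :
    (M.map f).rank = Fintype.card X ↔ M.rank = Fintype.card X := by
  refine ⟨fun h => ?_, fun h => ?_⟩
  · rw [rank_eq_card_iff_vecMul_eq_zero] at h ⊢
    intro v hv
    have hfv : f ∘ v = 0 := h _ <| funext fun i => by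
      rw [← RingHom.map_vecMul, hv, Pi.zero_apply, map_zero, Pi.zero_apply]
    exact funext fun i => f.injective (by simpa using congrFun hfv i)
  · obtain ⟨N, hN⟩ := exists_mul_eq_one_of_rank_eq_card h
    refine rank_eq_card_of_det_mul_ne_zero (N := N.map f) ?_
    rw [← Matrix.map_mul, hN, Matrix.map_one f f.map_zero f.map_one, det_one]
    exact one_ne_zero

end FullRowRank

theorem eventually_rank_map_eval_eq_card {K : Type*} [Field K] {X Y : Type*} [Fintype X]
    [DecidableEq X] [Fintype Y] (M : Matrix X Y K[X]) {s₀ : K}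
    (h : (M.map (eval s₀)).rank = Fintype.card X) :
    ∀ᶠ s : K in cofinite, (M.map (eval s)).rank = Fintype.card X := by
  -- With `M(s₀) * N = 1`, `det (M(s) * N)` is a polynomial in `s` equal to `1` at `s₀`.
  obtain ⟨N, hN⟩ := exists_mul_eq_one_of_rank_eq_card h
  have heval : ∀ s, (M * N.map C).det.eval s = (M.map (eval s) * N).det := fun s => by
    change evalRingHom s _ = _
    rw [RingHom.map_det, RingHom.mapMatrix_apply, Matrix.map_mul, Matrix.map_map]
    simp [Function.comp_def]
  have hd : (M * N.map C).det ≠ 0 := fun h0 => by simpa [hN, h0] using heval s₀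
  filter_upwards [(finite_setOfPred_isRoot hd).eventually_cofinite_notMem] with s hs
  exact rank_eq_card_of_det_mul_ne_zero (N := N) (by rwa [← heval])

end Matrix

section Krylov

variable {X U : Type*} [Fintype X] [DecidableEq X]

def krylovMatrix {R : Type*} [CommRing R] (N : ℕ) (A : Matrix X X R) (B : Matrix X U R) :
    Matrix X (Fin N × U) R :=
  fun i kj => (A ^ (kj.1 : ℕ) * B) i kj.2

theorem controllable_iff_rank_krylovMatrix [Fintype U] {A : Matrix X X ℝ} {B : Matrix X U ℝ} :
    Controllable A B ↔ (krylovMatrix (Fintype.card X) A B).rank = Fintype.card X :=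
  Iff.rfl

theorem krylovMatrix_map {R S : Type*} [CommRing R] [CommRing S] (f : R →+* S) (N : ℕ)
    (A : Matrix X X R) (B : Matrix X U R) :
    (krylovMatrix N A B).map f = krylovMatrix N (A.map f) (B.map f) := by
  ext i ⟨j, u⟩
  simp only [krylovMatrix, map_apply, RingHom.map_matrix_mul, ← RingHom.mapMatrix_apply, map_pow]

theorem vecMul_krylovMatrix_eq_zero_iff {K : Type*} [Field K] {N : ℕ} {A : Matrix X X K}
    {B : Matrix X U K} {v : X → K} :
    v ᵥ* krylovMatrix N A B = 0 ↔ ∀ j < N, v ᵥ* (A ^ j * B) = 0 := by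
  simp only [funext_iff, Prod.forall, Fin.forall_iff, Pi.zero_apply]
  rfl

theorem eventually_rank_krylovMatrix_add_smul {K : Type*} [Field K] [Fintype U] (N : ℕ)
    (A J : Matrix X X K) (B G : Matrix X U K) {s₀ : K}
    (h : (krylovMatrix N (A + s₀ • J) (B + s₀ • G)).rank = Fintype.card X) :
    ∀ᶠ s : K in cofinite,
      (krylovMatrix N (A + s • J) (B + s • G)).rank = Fintype.card X := by
  set M := krylovMatrix N (A.map C + (Polynomial.X : K[X]) • J.map C)
    (B.map C + (Polynomial.X : K[X]) • G.map C)
  have hmap : ∀ s : K, M.map (eval s) = krylovMatrix N (A + s • J) (B + s • G) := by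
    intro s
    rw [← coe_evalRingHom, krylovMatrix_map]
    congr 1 <;> ext <;> simp [mul_comm s]
  filter_upwards [M.eventually_rank_map_eval_eq_card (s₀ := s₀) (by rw [hmap]; exact h)]
    with s hs
  rwa [hmap] at hs

end Krylov

theorem Module.End.exists_sum_eigenvectors_of_pow_eq_one {K V : Type*} [Field K]
    [AddCommGroup V] [Module K V] {f : Module.End K V} {M : ℕ} (hM : 0 < M) (hf : f ^ M = 1)
    {ζ : K} (hζ : IsPrimitiveRoot ζ M) (x : V) :
    ∃ z : ℕ → V, (∀ t, f (z t) = ζ ^ t • z t) ∧ ∑ t ∈ Finset.range M, z t = x := by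
  have : NeZero M := ⟨hM.ne'⟩
  have hMK : (M : K) ≠ 0 := hζ.neZero'.out
  have hζ0 : ζ ≠ 0 := hζ.ne_zero hM.ne'
  set w := ζ⁻¹
  have hwM : w ^ M = 1 := by rw [inv_pow, hζ.pow_eq_one, inv_one]
  -- `z t` is the discrete Fourier coefficient of `m ↦ f^m x`, the `ζ^t`-eigencomponent of `x`.
  refine ⟨fun t => (M : K)⁻¹ • ∑ m ∈ Finset.range M, w ^ (t * m) • (f ^ m) x,
    fun t => ?_, ?_⟩
  · set g : ℕ → V := fun m => w ^ (t * m) • (f ^ m) x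
    have hshift : ∑ m ∈ Finset.range M, g (m + 1) = ∑ m ∈ Finset.range M, g m := by
      have hgM : g M = g 0 := by simp [g, hf, pow_mul', hwM]
      have := Finset.sum_range_succ' g M
      rw [Finset.sum_range_succ, hgM, add_left_inj] at this
      exact this.symm
    have hstep : ∀ m, w ^ (t * m) • (f ^ (m + 1)) x = ζ ^ t • g (m + 1) := fun m => by
      simp only [g, smul_smul, mul_add, mul_one, pow_add, w, inv_pow]
      field_simp
    simp only [map_smul, map_sum, ← Module.End.mul_apply, ← pow_succ', hstep,
      ← Finset.smul_sum, hshift, smul_comm (M : K)⁻¹]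
    rfl
  · have hgeom : ∀ m ∈ Finset.range M, m ≠ 0 →
        ∑ t ∈ Finset.range M, w ^ (t * m) = 0 := by
      intro m hm hm0
      have hwm : w ^ m ≠ 1 := hζ.inv.pow_ne_one_of_pos_of_lt hm0 (Finset.mem_range.mp hm)
      simp_rw [mul_comm _ m, pow_mul]
      rw [geom_sum_eq hwm, ← pow_mul, mul_comm, pow_mul, hwM, one_pow, sub_self, zero_div]
    rw [← Finset.smul_sum, Finset.sum_comm]
    simp_rw [← Finset.sum_smul]
    rw [Finset.sum_eq_single_of_mem 0 (Finset.mem_range.mpr hM)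
      (fun m hm hm0 => by rw [hgeom m hm hm0, zero_smul])]
    simp [hMK]

theorem Matrix.map_kronecker {R S ι κ : Type*} [CommRing R] [CommRing S] (f : R →+* S)
    {Y Z : Type*} (A : Matrix ι κ R) (B : Matrix Y Z R) :
    (A ⊗ₖ B).map f = A.map f ⊗ₖ B.map f := by
  ext
  simp

section Kronecker

variable {K : Type*} [Field K] {ι X : Type*} [Fintype ι]

def contractFst (z : ι → K) (v : ι × X → K) : X → K :=
  Matrix.of (fun q k => v (k, q)) *ᵥ z

theorem contractFst_add (z : ι → K) (v w : ι × X → K) :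
    contractFst z (v + w) = contractFst z v + contractFst z w :=
  Matrix.add_mulVec _ _ z

variable [Fintype X]

theorem contractFst_vecMul_kronecker {Y : Type*} {P : Matrix ι ι K} {z : ι → K} {c : K}
    (hz : P *ᵥ z = c • z) (v : ι × X → K) (H : Matrix X Y K) :
    contractFst z (v ᵥ* (P ⊗ₖ H)) = c • (contractFst z v ᵥ* H) := by
  set V : Matrix X ι K := Matrix.of fun q k => v (k, q)
  change (Matrix.of fun q k => (Matrix.vec V ᵥ* (P ⊗ₖ H)) (k, q)) *ᵥ z =
    c • ((V *ᵥ z) ᵥ* H)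
  rw [Matrix.vec_vecMul_kronecker]
  change (Hᵀ * V * P) *ᵥ z = _
  rw [← Matrix.mulVec_mulVec, hz, Matrix.mulVec_smul, ← Matrix.mulVec_mulVec,
    Matrix.mulVec_transpose]

variable [DecidableEq ι] [DecidableEq X]

omit [DecidableEq X] in
theorem contractFst_vecMul_one_kronecker {Y : Type*} (z : ι → K) (v : ι × X → K)
    (H : Matrix X Y K) :
    contractFst z (v ᵥ* ((1 : Matrix ι ι K) ⊗ₖ H)) = contractFst z v ᵥ* H := by
  rw [contractFst_vecMul_kronecker (c := 1) (by rw [one_smul, Matrix.one_mulVec]), one_smul]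

theorem contractFst_vecMul_kronecker_pow {P : Matrix ι ι K} {z : ι → K} {c : K}
    (hz : P *ᵥ z = c • z) (A H : Matrix X X K) (v : ι × X → K) (j : ℕ) :
    contractFst z (v ᵥ* ((1 : Matrix ι ι K) ⊗ₖ A + P ⊗ₖ H) ^ j) =
      contractFst z v ᵥ* (A + c • H) ^ j := by
  induction j with
  | zero => simp [Matrix.vecMul_one]
  | succ j ih =>
    rw [pow_succ, pow_succ, ← Matrix.vecMul_vecMul, ← Matrix.vecMul_vecMul, ← ih,
      Matrix.vecMul_add, contractFst_add, contractFst_vecMul_one_kronecker,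
      contractFst_vecMul_kronecker hz, Matrix.vecMul_add, Matrix.vecMul_smul]

theorem contractFst_eq_zero_of_vecMul_krylovMatrix_eq_zero {U : Type*} [Fintype U]
    {P : Matrix ι ι K} {z : ι → K} {c : K} (hz : P *ᵥ z = c • z) {A H : Matrix X X K}
    {B : Matrix X U K} {N N' : ℕ} (hN : N ≤ N')
    (hrank : (krylovMatrix N (A + c • H) B).rank = Fintype.card X) {v : ι × X → K}
    (hv : v ᵥ* krylovMatrix N' ((1 : Matrix ι ι K) ⊗ₖ A + P ⊗ₖ H)
      ((1 : Matrix ι ι K) ⊗ₖ B) = 0) :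
    contractFst z v = 0 := by
  refine Matrix.rank_eq_card_iff_vecMul_eq_zero.mp hrank _
    (vecMul_krylovMatrix_eq_zero_iff.mpr fun j hj => ?_)
  have hvj := vecMul_krylovMatrix_eq_zero_iff.mp hv j (hj.trans_le hN)
  rw [← Matrix.vecMul_vecMul, ← contractFst_vecMul_kronecker_pow hz,
    ← contractFst_vecMul_one_kronecker, Matrix.vecMul_vecMul, hvj]
  exact Matrix.zero_mulVec z

theorem rank_krylovMatrix_kronecker {U : Type*} [Fintype U] {P : Matrix ι ι K} {M : ℕ}
    (hM : 0 < M) (hP : P ^ M = 1) {ζ : K} (hζ : IsPrimitiveRoot ζ M) {A H : Matrix X X K}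
    {B : Matrix X U K}
    (h : ∀ t < M, (krylovMatrix (Fintype.card X) (A + ζ ^ t • H) B).rank = Fintype.card X) :
    (krylovMatrix (Fintype.card (ι × X)) ((1 : Matrix ι ι K) ⊗ₖ A + P ⊗ₖ H)
      ((1 : Matrix ι ι K) ⊗ₖ B)).rank = Fintype.card (ι × X) := by
  refine Matrix.rank_eq_card_iff_vecMul_eq_zero.mpr fun v hv => funext fun ⟨k, q⟩ => ?_
  have hN : Fintype.card X ≤ Fintype.card (ι × X) := by
    rw [Fintype.card_prod]
    exact Nat.le_mul_of_pos_left _ (Fintype.card_pos_iff.mpr ⟨k⟩)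
  have hPlin : Matrix.toLin' P ^ M = 1 := by
    change Matrix.toLinAlgEquiv' P ^ M = 1
    rw [← map_pow, hP, map_one]
  -- Split `e_k` into eigenvectors of `P`; `v` contracted against each one is `0`.
  obtain ⟨z, hz, hsum⟩ :=
    Module.End.exists_sum_eigenvectors_of_pow_eq_one hM hPlin hζ (Pi.single k 1)
  have hvk : v (k, q) = contractFst (Pi.single k 1) v q := by simp [contractFst]
  rw [hvk, ← hsum, contractFst, Matrix.mulVec_sum, Finset.sum_apply]
  refine Finset.sum_eq_zero fun t ht => congrFun (?_ : contractFst (z t) v = 0) q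
  exact contractFst_eq_zero_of_vecMul_krylovMatrix_eq_zero (by simpa using hz t) hN
    (h t (Finset.mem_range.mp ht)) hv

end Kronecker

theorem sameSparsity_add_smul_pattern {X Y : Type*} {M : Matrix X Y ℝ} {Mb : Matrix X Y Bool}
    (hM : ∀ i j, Mb i j = false → M i j = 0) {s : ℝ} (hs : ∀ i j, s ≠ -M i j) :
    SameSparsity (M + s • Mb.map fun b => if b then 1 else 0) Mb := by
  intro i j
  cases h : Mb i j
  · simp [h, hM i j h]
  · simpa [h, add_eq_zero_iff_neg_eq, eq_comm] using hs i j

section Structural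

variable {X U : Type*} [Fintype X] [DecidableEq X] [Fintype U]

theorem structurallyControllable_of_controllable_of_support {Ab : Matrix X X Bool}
    {Bb : Matrix X U Bool} {A : Matrix X X ℝ} {B : Matrix X U ℝ}
    (hA : ∀ i j, Ab i j = false → A i j = 0) (hB : ∀ i u, Bb i u = false → B i u = 0)
    (hc : Controllable A B) : StructurallyControllable Ab Bb := by
  set J : Matrix X X ℝ := Ab.map fun b => if b then 1 else 0
  set G : Matrix X U ℝ := Bb.map fun b => if b then 1 else 0
  have h₀ : (krylovMatrix (Fintype.card X) (A + (0 : ℝ) • J) (B + (0 : ℝ) • G)).rank =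
      Fintype.card X := by
    rw [zero_smul, zero_smul, add_zero, add_zero]
    exact hc
  have hgood := (eventually_rank_krylovMatrix_add_smul _ A J B G h₀).and <|
    (eventually_all.2 fun i => eventually_all.2 fun j => eventually_cofinite_ne (-A i j)).and
      (eventually_all.2 fun i => eventually_all.2 fun u => eventually_cofinite_ne (-B i u))
  obtain ⟨s, hs, hsA, hsB⟩ := hgood.exists
  exact ⟨_, _, sameSparsity_add_smul_pattern hA hsA, sameSparsity_add_smul_pattern hB hsB, hs⟩

end Structural

section Complexification

variable {X U : Type*} [Fintype X] [DecidableEq X] [Fintype U]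

theorem eventually_rank_krylovMatrix_ofReal_add_smul {A H : Matrix X X ℝ} {B : Matrix X U ℝ}
    (hc : Controllable (A + H) B) (S : Finset ℂ) (hS : 0 ∉ S) :
    ∀ᶠ t : ℝ in cofinite, ∀ c ∈ S, (krylovMatrix (Fintype.card X)
      (A.map Complex.ofReal + c • (t • H).map Complex.ofReal) (B.map Complex.ofReal)).rank =
        Fintype.card X := by
  rw [eventually_all_finset]
  intro c hc0
  have hc' : (krylovMatrix (Fintype.card X)
      (A.map Complex.ofRealHom + c⁻¹ • (c • H.map Complex.ofRealHom))
      (B.map Complex.ofRealHom + c⁻¹ • 0)).rank = Fintype.card X := by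
    rw [smul_smul, inv_mul_cancel₀ (ne_of_mem_of_not_mem hc0 hS), one_smul, smul_zero, add_zero,
      ← Matrix.map_add _ (map_add _), ← krylovMatrix_map, Matrix.rank_map_eq_card_iff]
    exact hc
  filter_upwards [Complex.ofReal_injective.tendsto_cofinite.eventually
    (eventually_rank_krylovMatrix_add_smul _ _ _ _ _ hc')] with t ht
  have hA : A.map Complex.ofReal + c • (t • H).map Complex.ofReal =
      A.map Complex.ofRealHom + (t : ℂ) • c • H.map Complex.ofRealHom := by
    ext i j
    simp [mul_left_comm]
  rwa [smul_zero, add_zero, ← hA] at ht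

theorem controllable_one_kronecker_add_kronecker {ι : Type*} [Fintype ι] [DecidableEq ι]
    {P : Matrix ι ι ℝ} {M : ℕ} (hM : 0 < M) (hP : P ^ M = 1) {ζ : ℂ}
    (hζ : IsPrimitiveRoot ζ M)
    {A H : Matrix X X ℝ} {B : Matrix X U ℝ}
    (h : ∀ τ < M, (krylovMatrix (Fintype.card X)
      (A.map Complex.ofReal + ζ ^ τ • H.map Complex.ofReal) (B.map Complex.ofReal)).rank =
        Fintype.card X) :
    Controllable ((1 : Matrix ι ι ℝ) ⊗ₖ A + P ⊗ₖ H)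
      ((1 : Matrix ι ι ℝ) ⊗ₖ B) := by
  have hPc : (P.map Complex.ofRealHom) ^ M = 1 := by
    rw [← RingHom.mapMatrix_apply, ← map_pow, hP, map_one]
  rw [controllable_iff_rank_krylovMatrix, ← Matrix.rank_map_eq_card_iff Complex.ofRealHom,
    krylovMatrix_map, Matrix.map_add _ (map_add _), Matrix.map_kronecker, Matrix.map_kronecker,
    Matrix.map_kronecker, Matrix.map_one _ (map_zero _) (map_one _)]
  exact rank_krylovMatrix_kronecker hM hPc hζ h

end Complexification

theorem exists_add_eq_of_sameSparsity_orMat {X : Type*} {M : Matrix X X ℝ}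
    {A H : Matrix X X Bool} (hM : SameSparsity M (orMat A H)) :
    ∃ A₀ H₀ : Matrix X X ℝ, (∀ i j, A i j = false → A₀ i j = 0) ∧
      (∀ i j, H i j = false → H₀ i j = 0) ∧ A₀ + H₀ = M := by
  refine ⟨Matrix.of fun i j => if A i j then M i j else 0,
    Matrix.of fun i j => if A i j then 0 else M i j,
    fun i j h => by simp [h], fun i j h => ?_, ?_⟩
  · cases hA : A i j
    · simpa [hA] using (hM i j).mpr (by simp [orMat, hA, h])
    · simp [hA]
  · ext i j
    by_cases hA : A i j <;> simp [hA]

section SimilarSystem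

variable {n p r : ℕ}

theorem kronecker_eq_zero_of_simA_eq_false {A' H : Matrix (Fin n) (Fin n) Bool}
    {E : Matrix (Fin r) (Fin r) Bool} {A₀ H₀ : Matrix (Fin n) (Fin n) ℝ}
    {P : Matrix (Fin r) (Fin r) ℝ} (hA₀ : ∀ i j, A' i j = false → A₀ i j = 0)
    (hH₀ : ∀ i j, H i j = false → H₀ i j = 0) (hP : ∀ k l, E k l = false → P k l = 0) :
    ∀ i j, simA r A' H E i j = false →
      ((1 : Matrix (Fin r) (Fin r) ℝ) ⊗ₖ A₀ + P ⊗ₖ H₀) i j = 0 := by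
  rintro ⟨k, q⟩ ⟨l, q'⟩ h
  simp only [simA, Bool.or_eq_false_iff, Bool.and_eq_false_iff] at h
  obtain ⟨hdiag, hcoupling⟩ := h
  have hdiag₀ : (1 : Matrix (Fin r) (Fin r) ℝ) k l * A₀ q q' = 0 := by
    by_cases hkl : k = l
    · simp only [hkl, if_true] at hdiag
      simp [hA₀ _ _ hdiag]
    · simp [Matrix.one_apply_ne hkl]
  have hcoupling₀ : P k l * H₀ q q' = 0 := by
    rcases hcoupling with hE | hH
    · simp [hP _ _ hE]
    · simp [hH₀ _ _ hH]
  simp only [Matrix.add_apply, Matrix.kronecker_apply, hdiag₀, hcoupling₀, add_zero]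

theorem kronecker_eq_zero_of_simB_eq_false {B' : Matrix (Fin n) (Fin p) Bool}
    {B₀ : Matrix (Fin n) (Fin p) ℝ} (hB₀ : ∀ i u, B' i u = false → B₀ i u = 0) :
    ∀ i u, simB r B' i u = false → ((1 : Matrix (Fin r) (Fin r) ℝ) ⊗ₖ B₀) i u = 0 := by
  rintro ⟨k, q⟩ ⟨l, c⟩ h
  by_cases hkl : k = l
  · simp only [simB, hkl, if_true] at h
    simp [hB₀ _ _ h]
  · simp [Matrix.one_apply_ne hkl]

end SimilarSystem

theorem similar_system_struct_controllable_of_cycle_spanned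
    {n p : ℕ} {r : ℕ}
    (A' H : Matrix (Fin n) (Fin n) Bool) (B' : Matrix (Fin n) (Fin p) Bool)
    (E : Matrix (Fin r) (Fin r) Bool)
    (hsc : StructurallyControllable (orMat A' H) B')
    (hcyc : ∃ σ : Equiv.Perm (Fin r), ∀ i : Fin r, E (σ i) i = true) :
    StructurallyControllable (simA r A' H E) (simB r B') := by
  obtain ⟨σ, hσ⟩ := hcyc
  obtain ⟨Ms, Bs, hMs, hBs, hc⟩ := hsc
  obtain ⟨A₀, H₀, hA₀, hH₀, rfl⟩ := exists_add_eq_of_sameSparsity_orMat hMs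
  have hM : 0 < orderOf σ := orderOf_pos σ
  obtain ⟨ζ, hζ⟩ : ∃ ζ : ℂ, IsPrimitiveRoot ζ (orderOf σ) :=
    ⟨_, Complex.isPrimitiveRoot_exp _ hM.ne'⟩
  obtain ⟨t, ht⟩ := (eventually_rank_krylovMatrix_ofReal_add_smul hc
    ((Finset.range (orderOf σ)).image (ζ ^ ·)) (by simp [hζ.ne_zero hM.ne'])).exists
  set P : Matrix (Fin r) (Fin r) ℝ := Matrix.permMatrixHom σ
  have hP : P ^ orderOf σ = 1 := by rw [← map_pow, pow_orderOf_eq_one, map_one]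
  have hPE : ∀ k l, E k l = false → P k l = 0 := by
    intro k l hkl
    have hne : k ≠ σ l := by
      rintro rfl
      simp [hσ l] at hkl
    simpa [P, PEquiv.toMatrix_apply, Equiv.symm_apply_eq] using hne
  refine structurallyControllable_of_controllable_of_support
    (kronecker_eq_zero_of_simA_eq_false (H₀ := t • H₀) hA₀
      (fun i j h => by simp [hH₀ i j h]) hPE)
    (kronecker_eq_zero_of_simB_eq_false fun i u h => (hBs i u).mpr h)
    (controllable_one_kronecker_add_kronecker hM hP hζ fun τ hτ =>
      ht _ (Finset.mem_image_of_mem _ (Finset.mem_range.mpr hτ)))
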